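/- Let ρ, σ be density operators on a finite-dimensional Hilbert space H with supp(ρ) ⊆ supp(σ), let d = D(ρ‖σ) be their observational divergence, let ε ∈ (0,1), and let M be a positive semidefinite operator on H. Then there exists a density operator ρ' on H with F(ρ', ρ) ≥ 1 − ε and (1−ε)·Tr(Mρ') ≤ 2^{d/ε}·Tr(Mσ). -/

import Mathlib

open Matrix ComplexOrder

variable {n : Type*} [Fintype n] [DecidableEq n]

/-- The former Mathlib `Matrix.PosSemidef.sqrt` (removed since), spelled out with its old definition. -/
noncomputable def posSemidefSqrt {A : Matrix n n ℂ} (hA : A.PosSemidef) : Matrix n n ℂ :=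
  hA.1.eigenvectorUnitary.1 * diagonal ((↑) ∘ (hA.1.eigenvalues · |>.sqrt)) *
  (star hA.1.eigenvectorUnitary : Matrix n n ℂ)

/-- The trace norm `‖M‖₁ = Tr √(Mᴴ M)` of a matrix. -/
noncomputable def traceNorm (M : Matrix n n ℂ) : ℝ :=
  ((posSemidefSqrt (Matrix.posSemidef_conjTranspose_mul_self M)).trace).re

/-- Positive semidefinite square root (junk value `0` off the PSD matrices). -/
noncomputable def msqrt (A : Matrix n n ℂ) : Matrix n n ℂ :=
  @dite _ A.PosSemidef (Classical.propDecidable _) (fun h => posSemidefSqrt h) (fun _ => 0)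

/-- Fidelity `F(ρ,σ) = ‖√ρ √σ‖₁²`. -/
noncomputable def fidelity (ρ σ : Matrix n n ℂ) : ℝ :=
  (traceNorm (msqrt ρ * msqrt σ)) ^ 2

/-- A density operator: positive semidefinite with unit trace. -/
def IsDensity (ρ : Matrix n n ℂ) : Prop := ρ.PosSemidef ∧ ρ.trace = 1

/-- The Löwner partial order `A ⪯ B`. -/
def Loewner (A B : Matrix n n ℂ) : Prop := (B - A).PosSemidef

/-- `supp ρ ⊆ supp σ`, expressed for PSD matrices as `ker σ ⊆ ker ρ`. -/
def SuppSubset (ρ σ : Matrix n n ℂ) : Prop := ∀ v, σ *ᵥ v = 0 → ρ *ᵥ v = 0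

/-- Observational divergence `D(ρ‖σ)`. -/
noncomputable def obsDiv (ρ σ : Matrix n n ℂ) : ℝ :=
  sSup { x | ∃ M : Matrix n n ℂ, M.PosSemidef ∧ (1 - M).PosSemidef ∧
    (M * σ).trace ≠ 0 ∧
    x = ((M * ρ).trace).re * Real.logb 2 (((M * ρ).trace).re / ((M * σ).trace).re) }


section SqrtAux
open scoped MatrixOrder

lemma posSemidefSqrt_eq_cfc {A : Matrix n n ℂ} (hA : A.PosSemidef) :
    posSemidefSqrt hA = CFC.sqrt A := by
  rw [CFC.sqrt_eq_cfc, cfc_nnreal_eq_real _ A hA.nonneg, hA.1.cfc_eq, IsHermitian.cfc,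
    posSemidefSqrt, Unitary.conjStarAlgAut_apply]
  congr 3
  funext i
  simp only [Function.comp_apply, Real.coe_sqrt, Real.coe_toNNReal _ (hA.eigenvalues_nonneg i)]
  rfl

lemma psd_sqrt_psd {A : Matrix n n ℂ} (hA : A.PosSemidef) : (posSemidefSqrt hA).PosSemidef := by
  rw [posSemidefSqrt_eq_cfc]; exact (CFC.sqrt_nonneg A).posSemidef

lemma psd_sqrt_mul_self {A : Matrix n n ℂ} (hA : A.PosSemidef) :
    posSemidefSqrt hA * posSemidefSqrt hA = A := by
  rw [posSemidefSqrt_eq_cfc]; exact CFC.sqrt_mul_sqrt_self A hA.nonneg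

lemma psd_eq_sqrt_of_sq_eq {Z X : Matrix n n ℂ} (hZ : Z.PosSemidef) (hX : X.PosSemidef)
    (h : Z ^ 2 = X) : Z = posSemidefSqrt hX := by
  rw [posSemidefSqrt_eq_cfc]; exact (CFC.sqrt_unique (by rw [← sq, h]) hZ.nonneg).symm

end SqrtAux

section AuxOD
set_option linter.unusedSectionVars false


lemma psd_diag_nonneg {A : Matrix n n ℂ} (hA : A.PosSemidef) (i : n) : 0 ≤ A i i := by
  exact hA.diag_nonneg

lemma psd_trace_nonneg {A : Matrix n n ℂ} (hA : A.PosSemidef) : 0 ≤ A.trace := by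
  rw [Matrix.trace]
  exact Finset.sum_nonneg fun i _ => psd_diag_nonneg hA i

lemma psd_trace_mul_nonneg {A B : Matrix n n ℂ} (hA : A.PosSemidef) (hB : B.PosSemidef) :
    0 ≤ (A * B).trace := by
  have h1 : A * B = A * (posSemidefSqrt hB * posSemidefSqrt hB) := by rw [psd_sqrt_mul_self hB]
  have h2 : (A * (posSemidefSqrt hB * posSemidefSqrt hB)).trace = (posSemidefSqrt hB * A * posSemidefSqrt hB).trace := by
    rw [← mul_assoc, Matrix.trace_mul_cycle]
  rw [h1, h2]
  refine psd_trace_nonneg ?_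
  have := hA.mul_mul_conjTranspose_same (posSemidefSqrt hB)
  rwa [(psd_sqrt_psd hB).1.eq] at this

lemma nonneg_c_eq_re {z : ℂ} (hz : 0 ≤ z) : z = (z.re : ℂ) := by
  rw [Complex.le_def] at hz
  exact Complex.ext rfl (by simpa using hz.2.symm)

lemma psd_trace_mul_re_nonneg {A B : Matrix n n ℂ} (hA : A.PosSemidef) (hB : B.PosSemidef) :
    0 ≤ ((A * B).trace).re := by
  have := psd_trace_mul_nonneg hA hB
  rw [Complex.le_def] at this; simpa using this.1



lemma conj_mul_conj {U : Matrix n n ℂ} (hU1 : Uᴴ * U = 1) (a b : n → ℂ) :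
    (U * diagonal a * Uᴴ) * (U * diagonal b * Uᴴ) = U * diagonal (a * b) * Uᴴ := by
  rw [mul_assoc, mul_assoc, ← mul_assoc (Uᴴ), ← mul_assoc (Uᴴ), hU1, one_mul,
    ← mul_assoc (diagonal a), diagonal_mul_diagonal, ← mul_assoc]
  rfl

lemma trace_conj_mul (U : Matrix n n ℂ) (a : n → ℂ) (A : Matrix n n ℂ) :
    ((U * diagonal a * Uᴴ) * A).trace = ∑ i, a i * ((Uᴴ * A * U) i i) := by
  rw [mul_assoc (U * diagonal a) (Uᴴ) A, Matrix.trace_mul_cycle, Matrix.trace]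
  congr 1
  ext i
  rw [Matrix.diag_apply, Matrix.mul_diagonal, mul_assoc, mul_comm]

lemma conj_psd {U : Matrix n n ℂ} {a : n → ℂ} (ha : ∀ i, 0 ≤ a i) :
    (U * diagonal a * Uᴴ).PosSemidef :=
  (Matrix.posSemidef_diagonal_iff.mpr ha).mul_mul_conjTranspose_same U

lemma conj_one {U : Matrix n n ℂ} (hU2 : U * Uᴴ = 1) :
    U * diagonal (fun _ => (1:ℂ)) * Uᴴ = 1 := by
  rw [diagonal_one, mul_one, hU2]

lemma conj_entry (U : Matrix n n ℂ) (A : Matrix n n ℂ) (i : n) :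
    (Uᴴ * A * U) i i = star (fun k => U k i) ⬝ᵥ (A *ᵥ fun k => U k i) := by
  simp only [Matrix.mul_apply, Matrix.conjTranspose_apply, dotProduct, mulVec,
    Finset.sum_mul, Finset.mul_sum, Pi.star_apply]
  rw [Finset.sum_comm]
  congr 1; ext k; congr 1; ext l; ring


lemma conj_psd' {U : Matrix n n ℂ} {a : n → ℂ} (ha : ∀ i, 0 ≤ a i) :
    (U * diagonal a * Uᴴ).PosSemidef :=
  (Matrix.posSemidef_diagonal_iff.mpr ha).mul_mul_conjTranspose_same U

lemma unitary_facts {A : Matrix n n ℂ} (hA : A.IsHermitian) :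
    (hA.eigenvectorUnitary : Matrix n n ℂ)ᴴ * (hA.eigenvectorUnitary : Matrix n n ℂ) = 1 ∧
    (hA.eigenvectorUnitary : Matrix n n ℂ) * (hA.eigenvectorUnitary : Matrix n n ℂ)ᴴ = 1 ∧
    A = (hA.eigenvectorUnitary : Matrix n n ℂ) * diagonal ((↑) ∘ hA.eigenvalues) *
        (hA.eigenvectorUnitary : Matrix n n ℂ)ᴴ := by
  refine ⟨?_, ?_, ?_⟩
  · rw [← Matrix.star_eq_conjTranspose]
    exact_mod_cast Unitary.coe_star_mul_self hA.eigenvectorUnitary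
  · rw [← Matrix.star_eq_conjTranspose]
    exact_mod_cast Unitary.coe_mul_star_self hA.eigenvectorUnitary
  · rw [← Matrix.star_eq_conjTranspose]
    exact hA.spectral_theorem

lemma trace_eq_sum_eigenvalues {A : Matrix n n ℂ} (hA : A.IsHermitian) :
    A.trace = ∑ i, (hA.eigenvalues i : ℂ) := by
  obtain ⟨h1, h2, h3⟩ := unitary_facts hA
  conv_lhs => rw [h3]
  rw [mul_assoc, Matrix.trace_mul_comm, mul_assoc, h1, mul_one, Matrix.trace_diagonal]
  rfl

lemma eigenvalues_le_one {A : Matrix n n ℂ} (hA : A.PosSemidef) (htr : A.trace = 1) (i : n) :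
    hA.1.eigenvalues i ≤ 1 := by
  have hsum : ∑ j, hA.1.eigenvalues j = 1 := by
    have h := trace_eq_sum_eigenvalues hA.1
    rw [htr] at h
    have : ((∑ j, hA.1.eigenvalues j : ℝ) : ℂ) = ((1:ℝ):ℂ) := by
      push_cast
      exact h.symm
    exact_mod_cast this
  rw [← hsum]
  exact Finset.single_le_sum (fun j _ => hA.eigenvalues_nonneg j) (Finset.mem_univ i)

lemma one_sub_psd {A : Matrix n n ℂ} (hA : A.PosSemidef) (htr : A.trace = 1) :
    (1 - A).PosSemidef := by
  obtain ⟨h1, h2, h3⟩ := unitary_facts hA.1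
  have key : 1 - A = (hA.1.eigenvectorUnitary : Matrix n n ℂ) *
      diagonal (fun i => 1 - ((hA.1.eigenvalues i : ℂ)))
      * (hA.1.eigenvectorUnitary : Matrix n n ℂ)ᴴ := by
    have hone : (1 : Matrix n n ℂ) = (hA.1.eigenvectorUnitary : Matrix n n ℂ) *
        diagonal (fun _ => (1:ℂ)) * (hA.1.eigenvectorUnitary : Matrix n n ℂ)ᴴ := by
      rw [show (diagonal (fun _ => (1:ℂ)) : Matrix n n ℂ) = 1 from diagonal_one, mul_one, h2]
    have key2 : ((hA.1.eigenvectorUnitary : Matrix n n ℂ) * diagonal (fun _ => (1:ℂ)) *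
        (hA.1.eigenvectorUnitary : Matrix n n ℂ)ᴴ) -
        ((hA.1.eigenvectorUnitary : Matrix n n ℂ) * diagonal ((↑) ∘ hA.1.eigenvalues) *
        (hA.1.eigenvectorUnitary : Matrix n n ℂ)ᴴ) =
        (hA.1.eigenvectorUnitary : Matrix n n ℂ) *
        diagonal (fun i => 1 - ((hA.1.eigenvalues i : ℂ))) *
        (hA.1.eigenvectorUnitary : Matrix n n ℂ)ᴴ := by
      rw [← sub_mul, ← mul_sub, diagonal_sub]
      rfl
    rw [← key2, ← hone, ← h3]
  rw [key]
  refine conj_psd' fun i => ?_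
  rw [sub_nonneg]
  exact_mod_cast eigenvalues_le_one hA htr i

lemma psd_smul {A : Matrix n n ℂ} (hA : A.PosSemidef) {c : ℝ} (hc : 0 ≤ c) :
    ((c:ℂ) • A).PosSemidef := by
  constructor
  · unfold Matrix.IsHermitian
    rw [conjTranspose_smul, hA.1.eq]
    congr 1
    simp [Complex.ext_iff]
  · intro x
    exact (hA.smul (show (0:ℂ) ≤ (c:ℂ) by exact_mod_cast hc)).2 x

lemma exists_dominating {ρ σ : Matrix n n ℂ} (hρ : ρ.PosSemidef) (hρt : ρ.trace = 1)
    (hσ : σ.PosSemidef) (hσt : σ.trace = 1)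
    (hsupp : ∀ v, σ *ᵥ v = 0 → ρ *ᵥ v = 0) :
    ∃ lam : ℝ, 0 < lam ∧ ((lam:ℂ) • σ - ρ).PosSemidef := by
  obtain ⟨h1, h2, h3⟩ := unitary_facts hσ.1
  set V : Matrix n n ℂ := (hσ.1.eigenvectorUnitary : Matrix n n ℂ) with hV
  set s : n → ℝ := hσ.1.eigenvalues with hs
  set T : Finset n := Finset.univ.filter (fun i => s i ≠ 0) with hT
  have hTne : T.Nonempty := by
    by_contra h
    rw [Finset.not_nonempty_iff_eq_empty] at h
    have hz : ∀ i, s i = 0 := by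
      intro i
      by_contra hi
      have : i ∈ T := by simp [hT, hi]
      simp [h] at this
    have : σ.trace = 0 := by
      rw [trace_eq_sum_eigenvalues hσ.1]
      simp [← hs, hz]
    rw [hσt] at this
    exact one_ne_zero this
  set μ0 : ℝ := T.inf' hTne s with hμ0
  have hμ0pos : 0 < μ0 := by
    obtain ⟨i0, hi0, he⟩ := T.exists_mem_eq_inf' hTne s
    rw [hμ0, he]
    have := hσ.eigenvalues_nonneg i0
    have hne : s i0 ≠ 0 := by simpa [hT] using hi0
    exact lt_of_le_of_ne this (Ne.symm hne)
  refine ⟨μ0⁻¹, inv_pos.mpr hμ0pos, ?_⟩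
  rw [Complex.ofReal_inv]
  set ind : n → ℂ := fun i => if s i ≠ 0 then (1:ℂ) else 0 with hind
  set Pp : Matrix n n ℂ := V * diagonal ind * Vᴴ with hPp
  have hii : ind * ind = ind := by
    funext i
    by_cases h : s i = 0 <;> simp [hind, h]
  have hsind : (Complex.ofReal ∘ s) * ind = Complex.ofReal ∘ s := by
    funext i
    by_cases h : s i = 0 <;> simp [hind, h]
  have hPppsd : Pp.PosSemidef := conj_psd' fun i => by
    by_cases h : s i = 0 <;> simp [hind, h]
  have key : (μ0:ℂ)⁻¹ • σ - ρ = ((μ0:ℂ)⁻¹ • σ - Pp) + (Pp - ρ) := by abel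
  rw [key]
  have part1 : ((μ0:ℂ)⁻¹ • σ - Pp).PosSemidef := by
    have hsm : (μ0:ℂ)⁻¹ • σ = V * diagonal (fun i => ((μ0⁻¹ * s i : ℝ) : ℂ)) * Vᴴ := by
      conv_lhs => rw [h3]
      rw [← Matrix.smul_mul, ← Matrix.mul_smul]
      congr 2
      have hfe : (μ0:ℂ)⁻¹ • (Complex.ofReal ∘ s) = fun i => ((μ0⁻¹ * s i : ℝ) : ℂ) := by
        funext i
        show (μ0:ℂ)⁻¹ * ((s i : ℝ) : ℂ) = ((μ0⁻¹ * s i : ℝ) : ℂ)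
        push_cast
        ring
      rw [← diagonal_smul, hfe]
    rw [hsm, hPp]
    have keyd : V * diagonal (fun i => ((μ0⁻¹ * s i : ℝ) : ℂ)) * Vᴴ - V * diagonal ind * Vᴴ
        = V * diagonal (fun i => ((μ0⁻¹ * s i : ℝ) : ℂ) - ind i) * Vᴴ := by
      rw [← sub_mul, ← mul_sub, diagonal_sub]
    rw [keyd]
    refine conj_psd' fun i => ?_
    by_cases h : s i ≠ 0
    · have hmem : i ∈ T := by simp [hT, h]
      have : μ0 ≤ s i := Finset.inf'_le s hmem
      have h1' : (1:ℝ) ≤ μ0⁻¹ * s i := by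
        rw [← inv_mul_cancel₀ (ne_of_gt hμ0pos)]
        exact mul_le_mul_of_nonneg_left this (le_of_lt (inv_pos.mpr hμ0pos))
      simp only [hind, if_pos h]
      rw [show ((μ0⁻¹ * s i : ℝ) : ℂ) - 1 = ((μ0⁻¹ * s i - 1 : ℝ) : ℂ) by push_cast; ring]
      exact_mod_cast sub_nonneg.mpr h1'
    · push_neg at h
      simp [hind, h]
  have part2 : (Pp - ρ).PosSemidef := by
    have hPpH : Ppᴴ = Pp := hPppsd.1.eq
    have hPp2 : Pp * Pp = Pp := by
      rw [hPp, conj_mul_conj h1, hii]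
    refine Matrix.PosSemidef.of_dotProduct_mulVec_nonneg ?_ ?_
    · unfold Matrix.IsHermitian
      rw [conjTranspose_sub, hPpH, hρ.1.eq]
    · intro x
      set a : n → ℂ := Pp *ᵥ x with ha
      set w : n → ℂ := x - a with hw
      have hsPp : σ * Pp = σ := by
        conv_lhs => rw [h3, hPp, conj_mul_conj h1]
        conv_rhs => rw [h3]
        rw [hsind]
      have hσw : σ *ᵥ w = 0 := by
        rw [hw, mulVec_sub, ha, mulVec_mulVec, hsPp, sub_self]
      have hρw : ρ *ᵥ w = 0 := hsupp w hσw
      have hwρ : star w ᵥ* ρ = 0 := by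
        have := congrArg star hρw
        rw [star_mulVec, hρ.1.eq] at this
        simpa using this
      have hxw : x = a + w := by rw [hw]; ring
      have e1 : star x ⬝ᵥ ρ *ᵥ x = star a ⬝ᵥ ρ *ᵥ a := by
        conv_lhs => rw [hxw]
        rw [mulVec_add, hρw, add_zero, star_add, add_dotProduct]
        rw [dotProduct_mulVec (star w) ρ a, hwρ, zero_dotProduct, add_zero]
      have e2 : star x ⬝ᵥ Pp *ᵥ x = star a ⬝ᵥ a := by
        conv_rhs => rw [ha]
        rw [star_mulVec, hPpH, ← dotProduct_mulVec, mulVec_mulVec, hPp2]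
      rw [sub_mulVec, dotProduct_sub, e1, e2]
      have := (one_sub_psd hρ hρt).dotProduct_mulVec_nonneg a
      rw [sub_mulVec, dotProduct_sub, one_mulVec] at this
      exact this
  exact part1.add part2

lemma psd_trace_mul_eq_re {A B : Matrix n n ℂ} (hA : A.PosSemidef) (hB : B.PosSemidef) :
    (A * B).trace = (((A * B).trace).re : ℂ) := nonneg_c_eq_re (psd_trace_mul_nonneg hA hB)

lemma obsDiv_bddAbove {ρ σ : Matrix n n ℂ} (hρ : IsDensity ρ) (hσ : IsDensity σ)
    (hsupp : SuppSubset ρ σ) :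
    BddAbove {x | ∃ M : Matrix n n ℂ, M.PosSemidef ∧ (1 - M).PosSemidef ∧
      (M * σ).trace ≠ 0 ∧
      x = ((M * ρ).trace).re * Real.logb 2 (((M * ρ).trace).re / ((M * σ).trace).re)} := by
  obtain ⟨lam, hlam, hdom⟩ := exists_dominating hρ.1 hρ.2 hσ.1 hσ.2 hsupp
  refine ⟨max 0 (Real.logb 2 lam), ?_⟩
  rintro x ⟨N, hN, hN1, hNσ, rfl⟩
  set p := ((N * ρ).trace).re with hpdef
  set q := ((N * σ).trace).re with hqdef
  have hp0 : 0 ≤ p := psd_trace_mul_re_nonneg hN hρ.1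
  have hq0 : 0 < q := by
    rcases (psd_trace_mul_re_nonneg hN hσ.1).lt_or_eq with h | h
    · exact h
    · exfalso
      apply hNσ
      rw [psd_trace_mul_eq_re hN hσ.1, ← h, Complex.ofReal_zero]
  have hp1 : p ≤ 1 := by
    have h := psd_trace_mul_re_nonneg hN1 hρ.1
    have e : ((1 - N) * ρ).trace = ρ.trace - (N * ρ).trace := by
      rw [sub_mul, one_mul, trace_sub]
    rw [e, hρ.2] at h
    simp only [Complex.sub_re, Complex.one_re] at h
    linarith
  have hpq : p ≤ lam * q := by
    have h := psd_trace_mul_nonneg hN hdom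
    have e : (N * ((lam:ℂ) • σ - ρ)).trace = (lam:ℂ) * (N * σ).trace - (N * ρ).trace := by
      rw [mul_sub, trace_sub, Matrix.mul_smul, trace_smul, smul_eq_mul]
    rw [e, Complex.le_def] at h
    have h' := h.1
    simp only [Complex.sub_re, Complex.zero_re, Complex.re_ofReal_mul] at h'
    linarith
  by_cases hp : p = 0
  · simp only [hp, zero_mul]
    exact le_max_left _ _
  · have hppos : 0 < p := lt_of_le_of_ne hp0 (Ne.symm hp)
    have hratio : p / q ≤ lam := (div_le_iff₀ hq0).mpr (by linarith)
    have hlog : Real.logb 2 (p / q) ≤ Real.logb 2 lam :=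
      Real.logb_le_logb_of_le (by norm_num) (div_pos hppos hq0) hratio
    rcases le_or_gt (Real.logb 2 (p / q)) 0 with h | h
    · exact le_trans (mul_nonpos_of_nonneg_of_nonpos hp0 h) (le_max_left _ _)
    · calc p * Real.logb 2 (p / q) ≤ 1 * Real.logb 2 (p / q) :=
            mul_le_mul_of_nonneg_right hp1 (le_of_lt h)
        _ = Real.logb 2 (p / q) := one_mul _
        _ ≤ Real.logb 2 lam := hlog
        _ ≤ max 0 (Real.logb 2 lam) := le_max_right _ _

lemma zero_mem_obsDiv_set {ρ σ : Matrix n n ℂ} (hρ : IsDensity ρ) (hσ : IsDensity σ) :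
    (0:ℝ) ∈ {x | ∃ M : Matrix n n ℂ, M.PosSemidef ∧ (1 - M).PosSemidef ∧
      (M * σ).trace ≠ 0 ∧
      x = ((M * ρ).trace).re * Real.logb 2 (((M * ρ).trace).re / ((M * σ).trace).re)} := by
  refine ⟨1, Matrix.PosSemidef.one, by rw [sub_self]; exact Matrix.PosSemidef.zero, ?_, ?_⟩
  · rw [one_mul, hσ.2]; exact one_ne_zero
  · rw [one_mul, one_mul, hρ.2, hσ.2]
    norm_num

lemma obsDiv_nonneg {ρ σ : Matrix n n ℂ} (hρ : IsDensity ρ) (hσ : IsDensity σ)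
    (hsupp : SuppSubset ρ σ) : 0 ≤ obsDiv ρ σ :=
  le_csSup (obsDiv_bddAbove hρ hσ hsupp) (zero_mem_obsDiv_set hρ hσ)

lemma le_obsDiv {ρ σ : Matrix n n ℂ} (hρ : IsDensity ρ) (hσ : IsDensity σ)
    (hsupp : SuppSubset ρ σ) {N : Matrix n n ℂ} (hN : N.PosSemidef) (hN1 : (1 - N).PosSemidef)
    (hNσ : (N * σ).trace ≠ 0) :
    ((N * ρ).trace).re * Real.logb 2 (((N * ρ).trace).re / ((N * σ).trace).re) ≤ obsDiv ρ σ :=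
  le_csSup (obsDiv_bddAbove hρ hσ hsupp) ⟨N, hN, hN1, hNσ, rfl⟩

end AuxOD
set_option maxHeartbeats 2000000 in
theorem stmt1 (ρ σ M : Matrix n n ℂ) (hρ : IsDensity ρ) (hσ : IsDensity σ)
    (hsupp : SuppSubset ρ σ) (hM : M.PosSemidef) (ε : ℝ) (hε : ε ∈ Set.Ioo (0:ℝ) 1) :
    ∃ ρ' : Matrix n n ℂ, IsDensity ρ' ∧ fidelity ρ' ρ ≥ 1 - ε ∧
      (1 - ε) * ((M * ρ').trace).re ≤ (2:ℝ) ^ (obsDiv ρ σ / ε) * ((M * σ).trace).re := by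
  classical
  obtain ⟨hε0, hε1⟩ := hε
  have hρp := hρ.1
  have hσp := hσ.1
  set d : ℝ := obsDiv ρ σ with hd
  set r : ℝ := (2:ℝ) ^ (d / ε) with hrdef
  have hd0 : 0 ≤ d := obsDiv_nonneg hρ hσ hsupp
  have hrpos : 0 < r := Real.rpow_pos_of_pos (by norm_num) _
  have hr1 : 1 ≤ r := by
    have : (2:ℝ) ^ (0:ℝ) ≤ (2:ℝ) ^ (d / ε) :=
      Real.rpow_le_rpow_of_exponent_le (by norm_num) (div_nonneg hd0 hε0.le)
    simpa using this
  obtain ⟨hU1, hU2, hMspec⟩ := unitary_facts hM.1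
  set U : Matrix n n ℂ := (hM.1.eigenvectorUnitary : Matrix n n ℂ) with hUdef
  set μ : n → ℝ := hM.1.eigenvalues with hμdef
  have hμ0 : ∀ i, 0 ≤ μ i := hM.eigenvalues_nonneg
  set Dρ : Matrix n n ℂ := Uᴴ * ρ * U with hDρ
  set Dσ : Matrix n n ℂ := Uᴴ * σ * U with hDσ
  have hDρp : Dρ.PosSemidef := hρp.conjTranspose_mul_mul_same U
  have hDσp : Dσ.PosSemidef := hσp.conjTranspose_mul_mul_same U
  set P : n → ℝ := fun i => (Dρ i i).re with hP
  set Q : n → ℝ := fun i => (Dσ i i).re with hQ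
  have hPc : ∀ i, Dρ i i = (P i : ℂ) := fun i => nonneg_c_eq_re (psd_diag_nonneg hDρp i)
  have hQc : ∀ i, Dσ i i = (Q i : ℂ) := fun i => nonneg_c_eq_re (psd_diag_nonneg hDσp i)
  have hP0 : ∀ i, 0 ≤ P i := by
    intro i
    have := psd_diag_nonneg hDρp i
    rw [Complex.le_def] at this
    simpa using this.1
  have hQ0 : ∀ i, 0 ≤ Q i := by
    intro i
    have := psd_diag_nonneg hDσp i
    rw [Complex.le_def] at this
    simpa using this.1
  have hQP : ∀ i, Q i = 0 → P i = 0 := by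
    intro i hQi
    have hcol : σ *ᵥ (fun k => U k i) = 0 := by
      refine (hσp.dotProduct_mulVec_zero_iff (fun k => U k i)).mp ?_
      rw [← conj_entry U σ i, ← hDσ, hQc i, hQi, Complex.ofReal_zero]
    have hρcol := hsupp _ hcol
    have h0 : Dρ i i = 0 := by
      rw [hDρ, conj_entry U ρ i, hρcol]
      simp
    rw [hPc i] at h0
    exact_mod_cast h0
  have hPsum : ∑ i, P i = 1 := by
    have htr : Dρ.trace = ρ.trace := by
      rw [hDρ, Matrix.trace_mul_cycle, hU2, one_mul]
    have htr2 : ∑ i, Dρ i i = 1 := by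
      have : Dρ.trace = ∑ i, Dρ i i := rfl
      rw [← this, htr, hρ.2]
    have : ((∑ i, P i : ℝ) : ℂ) = 1 := by
      push_cast
      rw [show (∑ i, ((P i : ℝ):ℂ)) = ∑ i, Dρ i i from by simp_rw [hPc]]
      exact htr2
    exact_mod_cast this
  set p : n → Prop := fun i => r * Q i < P i with hp
  set B : Finset n := Finset.univ.filter p with hB
  set Bc : Finset n := Finset.univ.filter (fun i => ¬ p i) with hBc
  set PB : ℝ := ∑ i ∈ B, P i with hPB
  set c : ℝ := ∑ i ∈ Bc, P i with hc
  have hcPB : PB + c = 1 := by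
    rw [hPB, hc, hB, hBc, Finset.sum_filter_add_sum_filter_not, hPsum]
  have hPBle : PB ≤ ε := by
    rcases Finset.eq_empty_or_nonempty B with hBe | hBne
    · rw [hPB, hBe, Finset.sum_empty]; exact hε0.le
    · set QB : ℝ := ∑ i ∈ B, Q i with hQB
      set N : Matrix n n ℂ := U * diagonal (fun i => if p i then (1:ℂ) else 0) * Uᴴ with hNdef
      have hNp : N.PosSemidef := conj_psd' fun i => by by_cases h : p i <;> simp [h]
      have hN1 : (1 - N).PosSemidef := by
        have hone : (1 : Matrix n n ℂ) = U * diagonal (fun _ => (1:ℂ)) * Uᴴ := by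
          rw [show (diagonal (fun _ => (1:ℂ)) : Matrix n n ℂ) = 1 from diagonal_one, mul_one, hU2]
        have h1N : (1:Matrix n n ℂ) - N =
            U * diagonal (fun i => if p i then (0:ℂ) else 1) * Uᴴ := by
          conv_lhs => rw [hone, hNdef]
          rw [← sub_mul, ← mul_sub, diagonal_sub]
          have heq : (fun i => 1 - if p i then (1:ℂ) else 0)
              = fun i => if p i then (0:ℂ) else 1 := by
            funext i
            by_cases h : p i <;> simp [h]
          rw [heq]
        rw [h1N]
        exact conj_psd' fun i => by by_cases h : p i <;> simp [h]
      have htrNρ : (N * ρ).trace = (PB : ℂ) := by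
        rw [hNdef, trace_conj_mul, ← hDρ]
        rw [show (∑ i, (if p i then (1:ℂ) else 0) * Dρ i i)
            = ∑ i, (if p i then ((P i:ℝ):ℂ) else 0) from
          Finset.sum_congr rfl fun i _ => by by_cases h : p i <;> simp [h, hPc i]]
        rw [← Finset.sum_filter, ← hB, hPB]
        push_cast
        rfl
      have htrNσ : (N * σ).trace = (QB : ℂ) := by
        rw [hNdef, trace_conj_mul, ← hDσ]
        rw [show (∑ i, (if p i then (1:ℂ) else 0) * Dσ i i)
            = ∑ i, (if p i then ((Q i:ℝ):ℂ) else 0) from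
          Finset.sum_congr rfl fun i _ => by by_cases h : p i <;> simp [h, hQc i]]
        rw [← Finset.sum_filter, ← hB, hQB]
        push_cast
        rfl
      have hQBpos : 0 < QB := by
        obtain ⟨i0, hi0⟩ := hBne
        have hpi0 : p i0 := (Finset.mem_filter.mp hi0).2
        have hQi0pos : 0 < Q i0 := by
          rcases (hQ0 i0).lt_or_eq with h | h
          · exact h
          · exfalso
            have hP0' : P i0 = 0 := hQP i0 h.symm
            have : r * Q i0 < P i0 := hpi0
            rw [hP0', ← h] at this
            simp at this
        exact Finset.sum_pos' (fun i _ => hQ0 i) ⟨i0, hi0, hQi0pos⟩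
      have hval := le_obsDiv hρ hσ hsupp hNp hN1 (by
        rw [htrNσ]
        exact_mod_cast hQBpos.ne')
      rw [htrNρ, htrNσ, Complex.ofReal_re, Complex.ofReal_re] at hval
      by_contra hcon
      push_neg at hcon
      have hPBpos : 0 < PB := lt_trans hε0 hcon
      have hPBQB : r * QB < PB := by
        rw [hPB, hQB, Finset.mul_sum]
        exact Finset.sum_lt_sum_of_nonempty hBne fun i hi => (Finset.mem_filter.mp hi).2
      have hrltdiv : r < PB / QB := (lt_div_iff₀ hQBpos).mpr (by linarith)
      have hL : d / ε < Real.logb 2 (PB / QB) := by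
        have h1 : Real.logb 2 r = d / ε := Real.logb_rpow (by norm_num) (by norm_num)
        rw [← h1]
        exact Real.logb_lt_logb (by norm_num) hrpos hrltdiv
      have hLpos : 0 < Real.logb 2 (PB / QB) := lt_of_le_of_lt (div_nonneg hd0 hε0.le) hL
      have hdlt : d < PB * Real.logb 2 (PB / QB) := by
        calc d = ε * (d / ε) := by field_simp
          _ < ε * Real.logb 2 (PB / QB) := mul_lt_mul_of_pos_left hL hε0
          _ ≤ PB * Real.logb 2 (PB / QB) := mul_le_mul_of_nonneg_right hcon.le hLpos.le
      linarith
  have hcpos : 0 < c := by linarith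
  have hc1ε : 1 - ε ≤ c := by linarith
  set w : n → ℂ := fun i => if p i then 0 else 1 with hw
  set Pp : Matrix n n ℂ := U * diagonal w * Uᴴ with hPpdef
  have hwstar : star w = w := by
    funext i
    by_cases h : p i <;> simp [hw, h]
  have hww : w * w = w := by
    funext i
    by_cases h : p i <;> simp [hw, h]
  have hPpH : Ppᴴ = Pp := by
    rw [hPpdef, conjTranspose_mul, conjTranspose_mul, conjTranspose_conjTranspose,
      diagonal_conjTranspose, hwstar, mul_assoc]
  have hPppsd : Pp.PosSemidef := conj_psd' fun i => by by_cases h : p i <;> simp [hw, h]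
  have hPp2 : Pp * Pp = Pp := by
    rw [hPpdef, conj_mul_conj hU1, hww]
  set ρ' : Matrix n n ℂ := ((c⁻¹ : ℝ) : ℂ) • (Pp * ρ * Pp) with hρ'def
  have hPpρPp : (Pp * ρ * Pp).PosSemidef := by
    have := hρp.mul_mul_conjTranspose_same Pp
    rwa [hPpH] at this
  have hρ'psd : ρ'.PosSemidef := psd_smul hPpρPp (inv_nonneg.mpr hcpos.le)
  have htrPpρ : (Pp * ρ).trace = (c : ℂ) := by
    rw [hPpdef, trace_conj_mul, ← hDρ]
    rw [show (∑ i, w i * Dρ i i) = ∑ i, (if ¬ p i then ((P i : ℝ):ℂ) else 0) from by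
      refine Finset.sum_congr rfl fun i _ => ?_
      by_cases h : p i <;> simp [hw, h, hPc i]]
    rw [← Finset.sum_filter, ← hBc, hc]
    push_cast
    rfl
  have htrρ' : ρ'.trace = 1 := by
    rw [hρ'def, trace_smul, show Pp * ρ * Pp = Pp * (ρ * Pp) from mul_assoc _ _ _,
      Matrix.trace_mul_comm, show ρ * Pp * Pp = ρ * Pp from by rw [mul_assoc, hPp2],
      Matrix.trace_mul_comm, htrPpρ, smul_eq_mul]
    rw [show ((c⁻¹:ℝ):ℂ) * (c:ℂ) = (((c⁻¹ * c : ℝ)):ℂ) from by push_cast; ring,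
      inv_mul_cancel₀ hcpos.ne']
    norm_num
  refine ⟨ρ', ⟨hρ'psd, htrρ'⟩, ?_, ?_⟩
  · -- fidelity
    have hc0 : (0:ℝ) ≤ c := hcpos.le
    set R : Matrix n n ℂ := posSemidefSqrt hρp with hR
    have hRH : Rᴴ = R := (psd_sqrt_psd hρp).1
    have hR2 : R * R = ρ := psd_sqrt_mul_self hρp
    have hmsρ : msqrt ρ = R := by rw [msqrt, dif_pos hρp]
    have hmsρ' : msqrt ρ' = posSemidefSqrt hρ'psd := by rw [msqrt, dif_pos hρ'psd]
    set R' : Matrix n n ℂ := posSemidefSqrt hρ'psd with hR'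
    have hR'H : R'ᴴ = R' := (psd_sqrt_psd hρ'psd).1
    have hR'2 : R' * R' = ρ' := psd_sqrt_mul_self hρ'psd
    set Y : Matrix n n ℂ := R * Pp * R with hY
    have hYp : Y.PosSemidef := by
      have := hPppsd.conjTranspose_mul_mul_same R
      rwa [hRH] at this
    have hXX : (R' * R)ᴴ * (R' * R) = ((c⁻¹:ℝ):ℂ) • (Y * Y) := by
      rw [conjTranspose_mul, hRH, hR'H]
      calc R * R' * (R' * R) = R * (R' * R') * R := by
            rw [mul_assoc R R' (R' * R), ← mul_assoc R' R' R, ← mul_assoc R (R' * R') R]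
        _ = R * ρ' * R := by rw [hR'2]
        _ = ((c⁻¹:ℝ):ℂ) • (Y * Y) := by
            rw [hρ'def, hY, Matrix.mul_smul, Matrix.smul_mul]
            refine congrArg (((c⁻¹:ℝ):ℂ) • ·) ?_
            calc R * (Pp * ρ * Pp) * R = R * Pp * ρ * (Pp * R) := by
                  rw [← mul_assoc R (Pp * ρ) Pp, ← mul_assoc R Pp ρ, mul_assoc (R * Pp * ρ) Pp R]
              _ = R * Pp * (R * R) * (Pp * R) := by rw [hR2]
              _ = R * Pp * R * (R * Pp * R) := by
                  rw [← mul_assoc (R * Pp) R R, mul_assoc (R * Pp * R) R (Pp * R),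
                    ← mul_assoc R Pp R]
    set t : ℝ := Real.sqrt c with ht
    have htpos : 0 < t := Real.sqrt_pos.mpr hcpos
    set Z : Matrix n n ℂ := ((t⁻¹:ℝ):ℂ) • Y with hZ
    have hZp : Z.PosSemidef := psd_smul hYp (inv_nonneg.mpr htpos.le)
    have hZ2 : Z ^ 2 = (R' * R)ᴴ * (R' * R) := by
      rw [hZ, pow_two, Matrix.smul_mul, Matrix.mul_smul, smul_smul, hXX]
      congr 1
      rw [← Complex.ofReal_mul, ← mul_inv, Real.mul_self_sqrt hc0]
    have hsqrtXX : Z = posSemidefSqrt (Matrix.posSemidef_conjTranspose_mul_self (R' * R)) :=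
      psd_eq_sqrt_of_sq_eq hZp _ hZ2
    have htrY : Y.trace = (c:ℂ) := by
      rw [hY, Matrix.trace_mul_cycle, hR2, Matrix.trace_mul_comm]
      exact htrPpρ
    have hfid : fidelity ρ' ρ = c := by
      rw [fidelity, hmsρ, hmsρ', traceNorm, ← hsqrtXX, hZ, trace_smul, smul_eq_mul,
        htrY, show ((t⁻¹:ℝ):ℂ) * (c:ℂ) = ((t⁻¹ * c :ℝ):ℂ) from by push_cast; ring,
        Complex.ofReal_re, mul_pow, inv_pow, ht, Real.sq_sqrt hc0, sq, ← mul_assoc,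
        inv_mul_cancel₀ hcpos.ne', one_mul]
    rw [ge_iff_le, hfid]
    linarith
  · -- trace inequality
    set S : ℝ := ∑ i ∈ Bc, μ i * P i with hS
    set qS : ℝ := ∑ i, μ i * Q i with hqS
    have hσtr : (M * σ).trace = (qS : ℂ) := by
      rw [hMspec, trace_conj_mul, ← hDσ]
      rw [show (∑ i, (Complex.ofReal ∘ μ) i * Dσ i i) = ∑ i, ((μ i * Q i : ℝ) : ℂ) from
        Finset.sum_congr rfl fun i _ => by
          rw [Function.comp_apply, hQc i]
          push_cast
          ring]
      rw [hqS]
      push_cast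
      rfl
    have hg : Pp * M * Pp = U * diagonal (fun i => if p i then 0 else ((μ i : ℝ) : ℂ)) * Uᴴ := by
      have hfun : w * (Complex.ofReal ∘ μ) * w = fun i => if p i then 0 else ((μ i:ℝ):ℂ) := by
        funext i
        by_cases h : p i <;> simp [hw, h]
      rw [hPpdef, hMspec, conj_mul_conj hU1, conj_mul_conj hU1, hfun]
    have hρ'tr : (M * ρ').trace = ((c⁻¹ * S : ℝ) : ℂ) := by
      rw [hρ'def, Matrix.mul_smul, trace_smul, smul_eq_mul]
      have e1 : M * (Pp * ρ * Pp) = (M * Pp * ρ) * Pp := by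
        rw [← mul_assoc M (Pp * ρ) Pp, ← mul_assoc M Pp ρ]
      rw [e1, Matrix.trace_mul_comm]
      have e2 : Pp * (M * Pp * ρ) = (Pp * M * Pp) * ρ := by
        rw [← mul_assoc Pp (M * Pp) ρ, ← mul_assoc Pp M Pp]
      rw [e2, hg, trace_conj_mul, ← hDρ]
      rw [show (∑ i, (if p i then 0 else ((μ i:ℝ):ℂ)) * Dρ i i)
          = ∑ i, (if ¬ p i then ((μ i * P i : ℝ):ℂ) else 0) from
        Finset.sum_congr rfl fun i _ => by
          by_cases h : p i
          · simp [h]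
          · rw [hPc i]
            simp only [h, if_neg, if_pos, not_false_iff, if_true]
            push_cast
            ring]
      rw [← Finset.sum_filter, ← hBc, hS]
      push_cast
      ring
    rw [hρ'tr, hσtr, Complex.ofReal_re, Complex.ofReal_re]
    have hS0 : 0 ≤ S := Finset.sum_nonneg fun i _ => mul_nonneg (hμ0 i) (hP0 i)
    have hqS0 : 0 ≤ qS := Finset.sum_nonneg fun i _ => mul_nonneg (hμ0 i) (hQ0 i)
    have hSle : S ≤ r * qS := by
      calc S ≤ ∑ i ∈ Bc, μ i * (r * Q i) := by
            refine Finset.sum_le_sum fun i hi => ?_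
            have hnp : ¬ p i := (Finset.mem_filter.mp hi).2
            have hle : P i ≤ r * Q i := le_of_not_gt hnp
            exact mul_le_mul_of_nonneg_left hle (hμ0 i)
        _ = r * ∑ i ∈ Bc, μ i * Q i := by
            rw [Finset.mul_sum]
            exact Finset.sum_congr rfl fun i _ => by ring
        _ ≤ r * qS := by
            refine mul_le_mul_of_nonneg_left ?_ hrpos.le
            exact Finset.sum_le_sum_of_subset_of_nonneg (Finset.subset_univ _)
              (fun i _ _ => mul_nonneg (hμ0 i) (hQ0 i))
    have h2 : (1 - ε) * c⁻¹ ≤ 1 := by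
      rw [← div_eq_mul_inv]
      exact div_le_one_of_le₀ hc1ε hcpos.le
    calc (1 - ε) * (c⁻¹ * S) = ((1 - ε) * c⁻¹) * S := by ring
      _ ≤ 1 * S := mul_le_mul_of_nonneg_right h2 hS0
      _ = S := one_mul S
      _ ≤ r * qS := hSle
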